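/- arXiv:2504.03542 — 2 statements merged into one kernel-verified Lean document; each statement's English description precedes it below -/
import Mathlib

section
/- Let X be a three-dimensional normed space over ℂ and let Y ⊆ X be a two-dimensional linear subspace. Let P : X → X be a minimal projection onto Y and assume ‖P‖ > 1. Then P is a 2-strongly unique minimal projection: there exists r > 0 such that ‖Q‖² ≥ ‖P‖² + r‖Q − P‖² for every projection Q onto Y. -/
/-!
A minimal projection satisfies Kolmogorov's criterion: otherwise a separating functional gives a
direction `D = f ⊗ v` (where `x = P x + f x • k` and `v ∈ Y`) along which `‖P - t D‖ < ‖P‖`.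
Hence there are norming pairs `(xᵢ, ψᵢ)` of `P` and convex weights `wᵢ` with
`∑ wᵢ f(xᵢ) ψᵢ = 0` on `Y`. Every projection onto `Y` is `Q = P + f ⊗ Q k`, and averaging
`|ψᵢ(Q xᵢ)|² = |‖P‖ + f(xᵢ) ψᵢ(Q k)|²` gives `‖Q‖² ≥ ‖P‖² + q(Q k)` with
`q(v) = ∑ wᵢ |f(xᵢ) ψᵢ(v)|²`. When `dim Y = 2` and `‖P‖ > 1` the form `q` is positive definite
on `Y`, so `q(Q k) ≥ c ‖Q k‖² = c ‖Q - P‖² / ‖f‖²`.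
-/

open Module Set Metric RCLike

theorem IsCompact.convexHull_of_finiteDimensional {E : Type*} [NormedAddCommGroup E]
    [NormedSpace ℝ E] [FiniteDimensional ℝ E] {s : Set E} (hs : IsCompact s) :
    IsCompact (convexHull ℝ s) := by
  rcases s.eq_empty_or_nonempty with rfl | ⟨s₀, hs₀⟩
  · simp
  let n := finrank ℝ E + 1
  let Φ : (Fin n → ℝ) × (Fin n → E) → E := fun p => ∑ i, p.1 i • p.2 i
  suffices convexHull ℝ s = Φ '' (stdSimplex ℝ (Fin n) ×ˢ univ.pi fun _ => s) from
    this ▸ ((isCompact_stdSimplex _ _).prod (isCompact_univ_pi fun _ => hs)).image (by fun_prop)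
  refine Subset.antisymm (fun x hx => ?_) ?_
  · obtain ⟨ι, _, z, w, hzs, hind, hw0, hw1, rfl⟩ := eq_pos_convex_span_of_mem_convexHull hx
    obtain ⟨e⟩ : Nonempty (ι ↪ Fin n) := Function.Embedding.nonempty_of_card_le <| by
      simpa using hind.card_le_finrank_succ.trans (Nat.succ_le_succ (Submodule.finrank_le _))
    classical
    set w' : Fin n → ℝ := Function.extend e w 0
    set z' : Fin n → E := Function.extend e z fun _ => s₀
    have hw' (i : ι) : w' (e i) = w i := e.injective.extend_apply _ _ _
    have hz' (i : ι) : z' (e i) = z i := e.injective.extend_apply _ _ _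
    have hw'0 (j : Fin n) (hj : j ∉ range e) : w' j = 0 := Function.extend_apply' _ _ _ hj
    refine ⟨(w', z'), ⟨⟨fun j => ?_, ?_⟩, fun j _ => ?_⟩, ?_⟩
    · by_cases hj : j ∈ range e
      · obtain ⟨i, rfl⟩ := hj; exact (hw' i).ge.trans' (hw0 i).le
      · exact (hw'0 j hj).ge
    · rw [← hw1]
      exact (Fintype.sum_of_injective e e.injective _ _ hw'0 fun i => (hw' i).symm).symm
    · by_cases hj : j ∈ range e
      · obtain ⟨i, rfl⟩ := hj; simpa [hz' i] using hzs (mem_range_self i)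
      · simpa [z', Function.extend_apply' _ _ _ hj] using hs₀
    · exact (Fintype.sum_of_injective e e.injective _ (fun j => w' j • z' j)
        (fun j hj => by simp [hw'0 j hj]) fun i => by simp [hw', hz']).symm
  · rintro _ ⟨p, ⟨hw, hz⟩, rfl⟩
    exact (convex_convexHull ℝ s).sum_mem (fun i _ => hw.1 i) hw.2
      fun i _ => subset_convexHull ℝ s (hz i trivial)

theorem exists_eq_re_sum_mul {ι : Type*} [Fintype ι] (g : (ι → ℂ) →L[ℝ] ℝ) :
    ∃ a : ι → ℂ, ∀ z, g z = (∑ i, a i * z i).re := by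
  classical
  refine ⟨fun i => ⟨g (Pi.single i 1), -g (Pi.single i Complex.I)⟩, fun z => ?_⟩
  have hsingle (i : ι) : Pi.single i (z i) =
      (z i).re • (Pi.single i 1 : ι → ℂ) + (z i).im • (Pi.single i Complex.I : ι → ℂ) := by
    ext j
    by_cases h : j = i
    · subst h; simp
    · simp [h]
  conv_lhs => rw [← Finset.univ_sum_single z]
  simp only [hsingle, map_sum, map_add, map_smul, smul_eq_mul, Complex.re_sum, Complex.mul_re]
  exact Finset.sum_congr rfl fun _ _ => by ring

theorem LinearMap.mul_eq_mul_of_finrank_le_two {K V : Type*} [Field K] [AddCommGroup V]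
    [Module K V] [FiniteDimensional K V] (hV : finrank K V ≤ 2) {φ χ : V →ₗ[K] K} {v : V}
    (hv : v ≠ 0) (hφ : φ v = 0) (hχ : χ v = 0) (a b : V) : φ a * χ b = φ b * χ a := by
  have hdep : ¬LinearIndependent K ![a, b, v] := fun h => by
    simpa using h.fintype_card_le_finrank.trans hV
  obtain ⟨g, hg, i, hi⟩ := Fintype.not_linearIndependent_iff.1 hdep
  simp only [Fin.sum_univ_three, Matrix.cons_val] at hg
  have hgφ := congr_arg φ hg
  have hgχ := congr_arg χ hg
  simp only [map_add, map_smul, smul_eq_mul, hφ, hχ, mul_zero, add_zero, map_zero] at hgφ hgχ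
  by_cases h0 : g 0 = 0
  · by_cases h1 : g 1 = 0
    · fin_cases i <;> simp_all
    · exact mul_left_cancel₀ h1 (by linear_combination φ a * hgχ - χ a * hgφ)
  · exact mul_left_cancel₀ h0 (by linear_combination χ b * hgφ - φ b * hgχ)

theorem re_mul_conj_le_of_norm_ofReal_mul_add_le {m : ℝ} {Z W : ℂ} (hm : 1 ≤ m)
    (hZ : m ≤ ‖Z‖) (h : ‖(m : ℂ) * Z + W‖ ≤ ‖Z‖) :
    (Z * (starRingEnd ℂ) W).re ≤ -(m * (m ^ 2 - 1) / 2) := by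
  have hsq : m ^ 2 * ‖Z‖ ^ 2 + 2 * m * (Z * (starRingEnd ℂ) W).re + ‖W‖ ^ 2 ≤ ‖Z‖ ^ 2 := by
    have := pow_le_pow_left₀ (norm_nonneg _) h 2
    rw [Complex.sq_norm, Complex.normSq_add, Complex.normSq_mul, Complex.normSq_ofReal,
      show (m : ℂ) * Z * (starRingEnd ℂ) W = m * (Z * (starRingEnd ℂ) W) by ring,
      Complex.re_ofReal_mul, Complex.normSq_eq_norm_sq, Complex.normSq_eq_norm_sq] at this
    linarith
  have hZ2 : m ^ 2 ≤ ‖Z‖ ^ 2 := pow_le_pow_left₀ (by linarith) hZ 2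
  nlinarith [sq_nonneg ‖W‖, mul_le_mul_of_nonneg_left hZ2 (by nlinarith : 0 ≤ m ^ 2 - 1)]

theorem sq_add_sum_mul_sq_norm_le {ι : Type*} [Fintype ι] {w : ι → ℝ} (hw0 : ∀ i, 0 ≤ w i)
    (hw1 : ∑ i, w i = 1) {c : ι → ℂ} (hc : ∑ i, (w i : ℂ) * c i = 0) {m M : ℝ}
    (h : ∀ i, ‖(m : ℂ) + c i‖ ≤ M) : m ^ 2 + ∑ i, w i * ‖c i‖ ^ 2 ≤ M ^ 2 := by
  have hre : ∑ i, w i * (c i).re = 0 := by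
    simpa [Complex.re_sum, Complex.re_ofReal_mul] using congr_arg Complex.re hc
  have hexp : ∑ i, w i * ‖(m : ℂ) + c i‖ ^ 2
      = m ^ 2 * ∑ i, w i + 2 * m * ∑ i, w i * (c i).re + ∑ i, w i * ‖c i‖ ^ 2 := by
    simp only [Finset.mul_sum, ← Finset.sum_add_distrib]
    refine Finset.sum_congr rfl fun i _ => ?_
    rw [Complex.sq_norm, Complex.sq_norm, Complex.normSq_add, Complex.normSq_ofReal,
      Complex.re_ofReal_mul, Complex.conj_re]
    ring
  calc m ^ 2 + ∑ i, w i * ‖c i‖ ^ 2 = ∑ i, w i * ‖(m : ℂ) + c i‖ ^ 2 := by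
        rw [hexp, hw1, hre]; ring
    _ ≤ ∑ i, w i * M ^ 2 := Finset.sum_le_sum fun i _ =>
        mul_le_mul_of_nonneg_left (pow_le_pow_left₀ (norm_nonneg _) (h i) 2) (hw0 i)
    _ = M ^ 2 := by rw [← Finset.sum_mul, hw1, one_mul]

theorem exists_pos_mul_sq_norm_le {𝕜 V : Type*} [RCLike 𝕜] [NormedAddCommGroup V]
    [NormedSpace 𝕜 V] [FiniteDimensional 𝕜 V] {q : V → ℝ} (hq : Continuous q)
    (hsmul : ∀ (t : 𝕜) v, q (t • v) = ‖t‖ ^ 2 * q v) (hpos : ∀ v, v ≠ 0 → 0 < q v) :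
    ∃ c > 0, ∀ v, c * ‖v‖ ^ 2 ≤ q v := by
  have := FiniteDimensional.proper_rclike 𝕜 V
  obtain ⟨c, hc, hcq⟩ := (isCompact_sphere (0 : V) 1).exists_forall_le' hq.continuousOn
    fun v hv => hpos v (ne_zero_of_mem_sphere one_ne_zero ⟨v, hv⟩)
  refine ⟨c, hc, fun v => ?_⟩
  rcases eq_or_ne v 0 with rfl | hv
  · simp [(by simpa using hsmul 0 0 : q 0 = 0)]
  · have hv' : 0 < ‖v‖ := norm_pos_iff.2 hv
    have := hcq ((‖v‖⁻¹ : 𝕜) • v) (by simp [norm_smul, hv'.ne'])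
    rw [hsmul] at this
    simpa [inv_pow, inv_mul_eq_div, le_div_iff₀ (by positivity : 0 < ‖v‖ ^ 2)] using this

section NormingPairs

variable {𝕜 E F : Type*} [RCLike 𝕜] [NormedAddCommGroup E] [NormedSpace 𝕜 E]
  [NormedAddCommGroup F] [NormedSpace 𝕜 F]

/-- Pairs are taken in the closed unit balls; for `T ≠ 0` the last condition forces
`‖p.1‖ = ‖p.2‖ = 1`. -/
def normingPairs (T : E →L[𝕜] F) : Set (E × (F →L[𝕜] 𝕜)) :=
  {p | ‖p.1‖ ≤ 1 ∧ ‖p.2‖ ≤ 1 ∧ p.2 (T p.1) = ‖T‖}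

theorem norm_apply_apply_le (S : E →L[𝕜] F) {x : E} {ψ : F →L[𝕜] 𝕜} (hx : ‖x‖ ≤ 1)
    (hψ : ‖ψ‖ ≤ 1) : ‖ψ (S x)‖ ≤ ‖S‖ := by
  simpa using ψ.le_of_opNorm_le_of_le hψ (S.le_of_opNorm_le_of_le le_rfl hx)

theorem opNorm_le_of_re_apply_apply_le (S : E →L[𝕜] F) {M : ℝ} (hM : 0 ≤ M)
    (h : ∀ (x : E) (ψ : F →L[𝕜] 𝕜), ‖x‖ ≤ 1 → ‖ψ‖ ≤ 1 → re (ψ (S x)) ≤ M) : ‖S‖ ≤ M := by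
  refine S.opNorm_le_of_unit_norm hM fun x hx => ?_
  obtain ⟨ψ, hψ, hψx⟩ := exists_dual_vector'' 𝕜 (S x)
  simpa [hψx] using h x ψ hx.le hψ

theorem isCompact_normingPairs [FiniteDimensional 𝕜 E] [FiniteDimensional 𝕜 F]
    (T : E →L[𝕜] F) : IsCompact (normingPairs T) := by
  have := FiniteDimensional.proper_rclike 𝕜 E
  have := FiniteDimensional.proper_rclike 𝕜 (F →L[𝕜] 𝕜)
  have hclosed : IsClosed {p : E × (F →L[𝕜] 𝕜) | p.2 (T p.1) = ‖T‖} :=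
    isClosed_eq (by fun_prop) continuous_const
  convert ((isCompact_closedBall (0 : E) 1).prod
    (isCompact_closedBall (0 : F →L[𝕜] 𝕜) 1)).inter_right hclosed using 1
  ext p
  simp [normingPairs, and_assoc]

theorem re_apply_apply_lt_of_notMem_normingPairs (T : E →L[𝕜] F) {p : E × (F →L[𝕜] 𝕜)}
    (hx : ‖p.1‖ ≤ 1) (hψ : ‖p.2‖ ≤ 1) (hp : p ∉ normingPairs T) : re (p.2 (T p.1)) < ‖T‖ := by
  have hT := norm_apply_apply_le T hx hψ
  refine ((re_le_norm _).trans hT).lt_of_ne fun h => hp ⟨hx, hψ, ?_⟩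
  rw [← le_antisymm hT (h ▸ re_le_norm _)]
  exact norm_le_re_iff_eq_norm.1 (hT.trans h.ge)

/-- Off the compact set `C` where `re ψ (D x) ≤ u / 2` the step gains `t u / 2`; on `C` the
maximum `m` of `re ψ (T x)` is `< ‖T‖`, as a maximiser with value `‖T‖` would be a norming pair. -/
theorem exists_opNorm_sub_smul_lt [FiniteDimensional 𝕜 E] [FiniteDimensional 𝕜 F]
    {T D : E →L[𝕜] F} {u : ℝ} (hu : 0 < u) (h : ∀ p ∈ normingPairs T, u ≤ re (p.2 (D p.1))) :
    ∃ t : ℝ, 0 < t ∧ ‖T - (t : 𝕜) • D‖ < ‖T‖ := by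
  have := FiniteDimensional.proper_rclike 𝕜 E
  have := FiniteDimensional.proper_rclike 𝕜 (F →L[𝕜] 𝕜)
  set C : Set (E × (F →L[𝕜] 𝕜)) :=
    (closedBall 0 1 ×ˢ closedBall 0 1) ∩ {p | re (p.2 (D p.1)) ≤ u / 2}
  have hC : IsCompact C := ((isCompact_closedBall _ _).prod (isCompact_closedBall _ _)).inter_right
    (isClosed_le (by fun_prop) continuous_const)
  have h0C : (0 : E × (F →L[𝕜] 𝕜)) ∈ C := ⟨by simp, by simpa using (half_pos hu).le⟩
  obtain ⟨p₀, ⟨⟨hx₀, hψ₀⟩, hD₀⟩, hmax⟩ := hC.exists_isMaxOn ⟨0, h0C⟩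
    (f := fun p => re (p.2 (T p.1))) (by fun_prop)
  set m := re (p₀.2 (T p₀.1))
  rw [mem_closedBall_zero_iff] at hx₀ hψ₀
  have hmT : m < ‖T‖ := re_apply_apply_lt_of_notMem_normingPairs T hx₀ hψ₀ fun hp => by
    linarith [h p₀ hp, hD₀.out]
  have hm : 0 ≤ m := by simpa using hmax h0C
  set t := (‖T‖ - m) / (2 * (‖D‖ + 1))
  have ht : 0 < t := div_pos (by linarith) (by positivity)
  have htD : t * ‖D‖ < ‖T‖ - m := by
    rw [div_mul_eq_mul_div, div_lt_iff₀ (by positivity)]; nlinarith [norm_nonneg D]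
  refine ⟨t, ht, ?_⟩
  refine (opNorm_le_of_re_apply_apply_le (M := max (m + t * ‖D‖) (‖T‖ - t * (u / 2))) _
    (le_max_of_le_left (by positivity)) fun x ψ hx hψ => ?_).trans_lt
    (max_lt (by linarith) (by nlinarith))
  have hre : re (ψ ((T - (t : 𝕜) • D) x)) = re (ψ (T x)) - t * re (ψ (D x)) := by simp
  by_cases hxψ : (x, ψ) ∈ C
  · have := neg_le_of_abs_le ((abs_re_le_norm _).trans (norm_apply_apply_le D hx hψ))
    refine le_max_of_le_left ?_
    have hTx : re (ψ (T x)) ≤ m := hmax hxψ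
    nlinarith
  · have hD : u / 2 < re (ψ (D x)) := by simpa [C, hx, hψ] using hxψ
    refine le_max_of_le_right ?_
    nlinarith [(re_le_norm _).trans (norm_apply_apply_le T hx hψ)]

end NormingPairs

section Projection

variable {X : Type*} [NormedAddCommGroup X] [NormedSpace ℂ X] {Y : Submodule ℂ X}
  {P Q : X →L[ℂ] X} {f : X →L[ℂ] ℂ} {k : X}

def IsProjectionOnto (Y : Submodule ℂ X) (P : X →L[ℂ] X) : Prop :=
  (∀ z, P z ∈ Y) ∧ ∀ y ∈ Y, P y = y

namespace IsProjectionOnto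

theorem sub (hP : IsProjectionOnto Y P) {D : X →L[ℂ] X} (hD : ∀ z, D z ∈ Y)
    (hDY : ∀ y ∈ Y, D y = 0) : IsProjectionOnto Y (P - D) :=
  ⟨fun z => Y.sub_mem (hP.1 z) (hD z), fun y hy => by simp [hP.2 y hy, hDY y hy]⟩

theorem exists_decomposition [FiniteDimensional ℂ X] (hP : IsProjectionOnto Y P)
    (hY : finrank ℂ Y + 1 = finrank ℂ X) :
    ∃ (k : X) (f : X →L[ℂ] ℂ), f k = 1 ∧ (∀ x, P x + f x • k = x) ∧ ∀ y ∈ Y, f y = 0 := by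
  have hrange : LinearMap.range (P : X →ₗ[ℂ] X) = Y :=
    le_antisymm (by rintro _ ⟨x, rfl⟩; exact hP.1 x) fun y hy => ⟨y, hP.2 y hy⟩
  have hker : finrank ℂ (LinearMap.ker (P : X →ₗ[ℂ] X)) = 1 := by
    have := LinearMap.finrank_range_add_finrank_ker (P : X →ₗ[ℂ] X)
    rw [hrange] at this
    omega
  obtain ⟨⟨k, hPk⟩, hk0, hspan⟩ := finrank_eq_one_iff'.1 hker
  obtain ⟨g, hgk⟩ := SeparatingDual.exists_eq_one (R := ℂ) (x := k) (by simpa using hk0)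
  have hPk : P k = 0 := hPk
  have hcoeff (x : X) : ∃ c : ℂ, c • k = x - P x := by
    obtain ⟨c, hc⟩ := hspan ⟨x - P x, by simp [hP.2 _ (hP.1 x)]⟩
    exact ⟨c, congr_arg Subtype.val hc⟩
  refine ⟨k, g.comp (ContinuousLinearMap.id ℂ X - P), by simp [hPk, hgk], fun x => ?_,
    fun y hy => by simp [hP.2 y hy]⟩
  obtain ⟨c, hc⟩ := hcoeff x
  have hgc : g (x - P x) = c := by rw [← hc, map_smul, hgk, smul_eq_mul, mul_one]
  show P x + g (x - P x) • k = x
  rw [hgc, hc, add_sub_cancel]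

theorem apply_eq_add (hP : IsProjectionOnto Y P) (hQ : IsProjectionOnto Y Q)
    (hdec : ∀ x, P x + f x • k = x) (x : X) : Q x = P x + f x • Q k := by
  conv_lhs => rw [← hdec x]
  rw [map_add, map_smul, hQ.2 _ (hP.1 x)]

theorem sub_eq_smulRight (hP : IsProjectionOnto Y P) (hQ : IsProjectionOnto Y Q)
    (hdec : ∀ x, P x + f x • k = x) : Q - P = f.smulRight (Q k) := by
  ext x
  simp [hP.apply_eq_add hQ hdec x]

theorem zero_mem_convexHull [FiniteDimensional ℂ X] (hP : IsProjectionOnto Y P)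
    (hmin : ∀ Q, IsProjectionOnto Y Q → ‖P‖ ≤ ‖Q‖) (hfY : ∀ y ∈ Y, f y = 0) {ι : Type*}
    [Fintype ι] {b : ι → X} (hb : ∀ i, b i ∈ Y) :
    (0 : ι → ℂ) ∈ convexHull ℝ ((fun p i => f p.1 * p.2 (b i)) '' normingPairs P) := by
  by_contra h0
  have hK : IsCompact ((fun p i => f p.1 * p.2 (b i)) '' normingPairs P) :=
    (isCompact_normingPairs P).image (by fun_prop)
  obtain ⟨g, u, hg0, hgu⟩ := geometric_hahn_banach_point_closed (convex_convexHull ℝ _)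
    hK.convexHull_of_finiteDimensional.isClosed h0
  obtain ⟨a, ha⟩ := exists_eq_re_sum_mul g
  set v := ∑ i, a i • b i
  have hv : v ∈ Y := Y.sum_mem fun i _ => Y.smul_mem _ (hb i)
  obtain ⟨t, -, hlt⟩ := exists_opNorm_sub_smul_lt (D := f.smulRight v) (by simpa using hg0)
    fun p hp => by
      have := hgu _ (subset_convexHull ℝ _ ⟨p, hp, rfl⟩)
      rw [ha] at this
      refine this.le.trans_eq ?_
      simp [v, Finset.mul_sum, mul_left_comm]
  exact hlt.not_ge <| hmin _ <| hP.sub (fun z => Y.smul_mem _ (Y.smul_mem _ hv))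
    fun y hy => by simp [hfY y hy]

theorem exists_normingFamily [FiniteDimensional ℂ X] (hP : IsProjectionOnto Y P)
    (hmin : ∀ Q, IsProjectionOnto Y Q → ‖P‖ ≤ ‖Q‖) (hfY : ∀ y ∈ Y, f y = 0) :
    ∃ (ι : Type) (_ : Fintype ι) (w : ι → ℝ) (p : ι → X × (X →L[ℂ] ℂ)), (∀ i, 0 < w i) ∧
      ∑ i, w i = 1 ∧ (∀ i, p i ∈ normingPairs P) ∧
      ∀ y ∈ Y, ∑ i, (w i : ℂ) * (f (p i).1 * (p i).2 y) = 0 := by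
  let b := Module.finBasis ℂ Y
  obtain ⟨ι, _, z, w, hz, -, hw0, hw1, hsum⟩ := eq_pos_convex_span_of_mem_convexHull
    (hP.zero_mem_convexHull hmin hfY (b := fun i => (b i : X)) fun i => (b i).2)
  choose p hp hpz using fun i => hz (mem_range_self i)
  refine ⟨ι, ‹_›, w, p, hw0, hw1, hp, ?_⟩
  let L : X →ₗ[ℂ] ℂ := ∑ i, ((w i : ℂ) * f (p i).1) • ((p i).2 : X →ₗ[ℂ] ℂ)
  have hL : L.comp Y.subtype = 0 := b.ext fun j => by
    have := congr_fun hsum j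
    simpa [L, ← hpz, mul_assoc, Finset.sum_apply] using this
  intro y hy
  simpa [L, mul_assoc] using LinearMap.congr_fun hL ⟨y, hy⟩

end IsProjectionOnto

variable {ι : Type*} [Fintype ι] {w : ι → ℝ} {p : ι → X × (X →L[ℂ] ℂ)}

noncomputable def normingForm (f : X →L[ℂ] ℂ) (w : ι → ℝ) (p : ι → X × (X →L[ℂ] ℂ)) (v : X) :
    ℝ :=
  ∑ i, w i * ‖f (p i).1 * (p i).2 v‖ ^ 2

theorem continuous_normingForm : Continuous (normingForm f w p) := by
  unfold normingForm; fun_prop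

theorem normingForm_smul (t : ℂ) (v : X) :
    normingForm f w p (t • v) = ‖t‖ ^ 2 * normingForm f w p v := by
  simp only [normingForm, Finset.mul_sum, map_smul, smul_eq_mul, norm_mul]
  exact Finset.sum_congr rfl fun _ _ => by ring

theorem IsProjectionOnto.sq_norm_add_normingForm_le (hP : IsProjectionOnto Y P)
    (hQ : IsProjectionOnto Y Q) (hdec : ∀ x, P x + f x • k = x) (hw0 : ∀ i, 0 ≤ w i)
    (hw1 : ∑ i, w i = 1) (hp : ∀ i, p i ∈ normingPairs P)
    (hL : ∀ y ∈ Y, ∑ i, (w i : ℂ) * (f (p i).1 * (p i).2 y) = 0) :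
    ‖P‖ ^ 2 + normingForm f w p (Q k) ≤ ‖Q‖ ^ 2 :=
  sq_add_sum_mul_sq_norm_le hw0 hw1 (hL _ (hQ.1 k)) fun i =>
    calc ‖(‖P‖ : ℂ) + f (p i).1 * (p i).2 (Q k)‖ = ‖(p i).2 (Q (p i).1)‖ := by
          rw [hP.apply_eq_add hQ hdec (p i).1, map_add, map_smul, smul_eq_mul, (hp i).2.2]
          rfl
      _ ≤ ‖Q‖ := norm_apply_apply_le Q (hp i).1 (hp i).2.1

theorem apply_ne_zero_of_mem_normingPairs (hm : 1 < ‖P‖) (hdec : ∀ x, P x + f x • k = x)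
    {q : X × (X →L[ℂ] ℂ)} (hq : q ∈ normingPairs P) : f q.1 ≠ 0 := by
  intro h0
  have hPq : P q.1 = q.1 := by simpa [h0] using hdec q.1
  have := q.2.le_of_opNorm_le_of_le hq.2.1 hq.1
  rw [← hPq, hq.2.2] at this
  simp at this
  linarith

theorem re_mul_conj_le_of_mem_normingPairs (hm : 1 < ‖P‖) (hdec : ∀ x, P x + f x • k = x)
    {q r : X × (X →L[ℂ] ℂ)} (hq : q ∈ normingPairs P) (hr : r ∈ normingPairs P) {z : X}
    (hz : ‖P‖ ≤ ‖r.2 z‖) (hqr : ‖q.2 z‖ ≤ ‖r.2 z‖) (hdet : r.2 (P q.1) * q.2 z = ‖P‖ * r.2 z) :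
    (r.2 z * (starRingEnd ℂ) (q.2 z * (f q.1 * r.2 k))).re ≤ -(‖P‖ * (‖P‖ ^ 2 - 1) / 2) := by
  refine re_mul_conj_le_of_norm_ofReal_mul_add_le hm.le hz ?_
  calc ‖(‖P‖ : ℂ) * r.2 z + q.2 z * (f q.1 * r.2 k)‖ = ‖q.2 z * r.2 q.1‖ := by
        conv_rhs => rw [← hdec q.1]
        rw [map_add, map_smul, smul_eq_mul, ← hdet]
        ring_nf
    _ ≤ ‖q.2 z‖ * 1 := by
        rw [norm_mul]
        gcongr
        simpa using r.2.le_of_opNorm_le_of_le hr.2.1 hq.1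
    _ ≤ ‖r.2 z‖ := by simpa using hqr

/-- Two-dimensionality of `Y` enters here: if all `ψᵢ` vanished at some `v ≠ 0`, their restrictions
to `Y` would be proportional, and testing the family against the `ψⱼ` maximising `|ψⱼ (P xⱼ₀)|`
contradicts `∑ wᵢ f(xᵢ) ψᵢ = 0` on `Y` because `‖P‖ > 1`. -/
theorem IsProjectionOnto.exists_apply_ne_zero [FiniteDimensional ℂ X] (hY : finrank ℂ Y ≤ 2)
    (hP : IsProjectionOnto Y P) (hm : 1 < ‖P‖) (hdec : ∀ x, P x + f x • k = x)
    (hw0 : ∀ i, 0 ≤ w i) (hw1 : ∑ i, w i = 1) (hp : ∀ i, p i ∈ normingPairs P)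
    (hL : ∀ y ∈ Y, ∑ i, (w i : ℂ) * (f (p i).1 * (p i).2 y) = 0) {v : X} (hvY : v ∈ Y)
    (hv : v ≠ 0) : ∃ i, (p i).2 v ≠ 0 := by
  by_contra! hv0
  obtain ⟨j₀⟩ : Nonempty ι := by
    by_contra! h
    simp at hw1
  set z₀ := P (p j₀).1
  obtain ⟨j, -, hj⟩ :=
    Finset.univ.exists_max_image (fun i => ‖(p i).2 z₀‖) ⟨j₀, Finset.mem_univ _⟩
  have hz : ‖P‖ ≤ ‖(p j).2 z₀‖ := by
    simpa [z₀, (hp j₀).2.2, abs_of_pos (zero_lt_one.trans hm)] using hj j₀ (Finset.mem_univ _)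
  have hdet (i : ι) : (p j).2 (P (p i).1) * (p i).2 z₀ = ‖P‖ * (p j).2 z₀ := by
    have := LinearMap.mul_eq_mul_of_finrank_le_two hY (φ := ((p j).2 : X →ₗ[ℂ] ℂ).comp Y.subtype)
      (χ := ((p i).2 : X →ₗ[ℂ] ℂ).comp Y.subtype) (v := ⟨v, hvY⟩) (by simpa using hv) (hv0 j)
      (hv0 i) ⟨_, hP.1 (p i).1⟩ ⟨_, hP.1 (p j₀).1⟩
    simp only [LinearMap.comp_apply, Submodule.subtype_apply, ContinuousLinearMap.coe_coe] at this
    rw [this, (hp i).2.2, mul_comm]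
    rfl
  have hsum : ∑ i, w i * ((p j).2 z₀ * (starRingEnd ℂ) ((p i).2 z₀ * (f (p i).1 * (p j).2 k))).re
      = ((p j).2 z₀ * (starRingEnd ℂ) ((p j).2 k) *
          (starRingEnd ℂ) (∑ i, (w i : ℂ) * (f (p i).1 * (p i).2 z₀))).re := by
    simp only [map_sum, Finset.mul_sum, Complex.re_sum]
    refine Finset.sum_congr rfl fun i _ => ?_
    rw [← Complex.re_ofReal_mul]
    simp only [map_mul, Complex.conj_ofReal]
    ring_nf
  have hle := Finset.sum_le_sum fun i (_ : i ∈ Finset.univ) => mul_le_mul_of_nonneg_left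
    (re_mul_conj_le_of_mem_normingPairs hm hdec (hp i) (hp j) hz (hj i (Finset.mem_univ _))
      (hdet i)) (hw0 i)
  rw [hsum, hL z₀ (hP.1 _), ← Finset.sum_mul, hw1] at hle
  simp only [map_zero, mul_zero, Complex.zero_re, one_mul] at hle
  nlinarith

theorem IsProjectionOnto.normingForm_pos [FiniteDimensional ℂ X] (hY : finrank ℂ Y ≤ 2)
    (hP : IsProjectionOnto Y P) (hm : 1 < ‖P‖) (hdec : ∀ x, P x + f x • k = x)
    (hw0 : ∀ i, 0 < w i) (hw1 : ∑ i, w i = 1) (hp : ∀ i, p i ∈ normingPairs P)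
    (hL : ∀ y ∈ Y, ∑ i, (w i : ℂ) * (f (p i).1 * (p i).2 y) = 0) {v : X} (hvY : v ∈ Y)
    (hv : v ≠ 0) : 0 < normingForm f w p v := by
  obtain ⟨i, hi⟩ := hP.exists_apply_ne_zero hY hm hdec (fun i => (hw0 i).le) hw1 hp hL hvY hv
  have hfi := apply_ne_zero_of_mem_normingPairs hm hdec (hp i)
  refine lt_of_lt_of_le ?_ (Finset.single_le_sum (fun j _ => ?_) (Finset.mem_univ i))
  · exact mul_pos (hw0 i) (pow_pos (norm_pos_iff.2 (mul_ne_zero hfi hi)) 2)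
  · exact mul_nonneg (hw0 j).le (by positivity)

end Projection

theorem stmt17 (X : Type*) [NormedAddCommGroup X] [NormedSpace ℂ X]
    (hX : Module.finrank ℂ X = 3)
    (Y : Submodule ℂ X) (hY : Module.finrank ℂ Y = 2)
    (P : X →L[ℂ] X) (hPY : ∀ z, P z ∈ Y) (hPid : ∀ y ∈ Y, P y = y)
    (hPmin : ∀ Q : X →L[ℂ] X, (∀ z, Q z ∈ Y) → (∀ y ∈ Y, Q y = y) → ‖P‖ ≤ ‖Q‖)
    (hPnorm : 1 < ‖P‖) :
    ∃ r > 0, ∀ Q : X →L[ℂ] X, (∀ z, Q z ∈ Y) → (∀ y ∈ Y, Q y = y) →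
      ‖Q‖ ^ 2 ≥ ‖P‖ ^ 2 + r * ‖Q - P‖ ^ 2 := by
  have : FiniteDimensional ℂ X := Module.finite_of_finrank_eq_succ hX
  have hP : IsProjectionOnto Y P := ⟨hPY, hPid⟩
  obtain ⟨k, f, hfk, hdec, hfY⟩ := hP.exists_decomposition (by rw [hX, hY])
  obtain ⟨ι, _, w, p, hw0, hw1, hp, hL⟩ :=
    hP.exists_normingFamily (fun Q hQ => hPmin Q hQ.1 hQ.2) hfY
  obtain ⟨c, hc, hcq⟩ := exists_pos_mul_sq_norm_le (𝕜 := ℂ) (V := Y)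
    (continuous_normingForm.comp continuous_subtype_val)
    (fun t v => by simpa using normingForm_smul t (v : X))
    fun v hv => hP.normingForm_pos hY.le hPnorm hdec hw0 hw1 hp hL v.2 (by simpa using hv)
  have hf : 0 < ‖f‖ := norm_pos_iff.2 fun h => by simp [h] at hfk
  refine ⟨c / ‖f‖ ^ 2, by positivity, fun Q hQY hQid => ?_⟩
  have hQ : IsProjectionOnto Y Q := ⟨hQY, hQid⟩
  have hQk := hcq ⟨Q k, hQY k⟩
  have hnorm := hP.sq_norm_add_normingForm_le hQ hdec (fun i => (hw0 i).le) hw1 hp hL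
  rw [hP.sub_eq_smulRight hQ hdec, ContinuousLinearMap.norm_smulRight_apply, mul_pow, ← mul_assoc,
    div_mul_cancel₀ _ (by positivity)]
  simp only [Submodule.coe_norm, Function.comp_apply] at hQk
  linarith
end

section
/- Let f = (f₁, …, f_n) ∈ ℂⁿ satisfy Σ_{j=1}^{n} |f_j| = 1 and 0 < |f_j| < 1/2 for every 1 ≤ j ≤ n, and let Y = {x ∈ ℓ∞ⁿ : Σ_{j=1}^{n} f_j x_j = 0} be the corresponding hyperplane of the complex space ℓ∞ⁿ. Then every minimal projection P from ℓ∞ⁿ onto Y is 2-strongly unique (there exists r > 0 such that ‖Q‖² ≥ ‖P‖² + r‖Q − P‖² for every projection Q onto Y), but for every α with 1 ≤ α < 2, P is NOT α-strongly unique (there is no r > 0 with ‖Q‖^α ≥ ‖P‖^α + r‖Q − P‖^α for every projection Q onto Y). -/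
/-!
Every projection onto `Y = ker f` has the form `x ↦ x - f(x) v` with `f(v) = 1`, and its norm
on `ℓ∞ⁿ` is its largest row norm. In the variables `zᵢ = fᵢ vᵢ`, which satisfy `∑ zᵢ = 1`, the
`i`-th row norm is `|1 - zᵢ| + bᵢ |zᵢ|` with `bᵢ = (1 - |fᵢ|) / |fᵢ| > 1`, and the largest one is
minimised exactly at the real point `cᵢ ∝ (bᵢ - 1)⁻¹`, where all row norms are equal. Since
`|x + iτ| = x + O(τ²)` for `x > 0`, a deviation `z - c` raises the largest row norm linearly in its
real part (whose coordinates sum to zero) but only quadratically in its imaginary part. Hence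
`‖Q‖² - ‖P‖² ≳ ‖Q - P‖²` for every projection `Q`, and the purely imaginary perturbations
`c ± iτ` in two coordinates give projections with `‖Q‖ - ‖P‖ ≲ ‖Q - P‖²`, which rules out every
exponent `α < 2`.
-/

open Finset Filter Topology ComplexConjugate

namespace ContinuousLinearMap

variable {𝕜 E : Type*} [NontriviallyNormedField 𝕜] [NormedAddCommGroup E] [NormedSpace 𝕜 E]

noncomputable def projAlong (φ : StrongDual 𝕜 E) (v : E) : E →L[𝕜] E :=
  ContinuousLinearMap.id 𝕜 E - φ.smulRight v

@[simp]
lemma projAlong_apply (φ : StrongDual 𝕜 E) (v x : E) : projAlong φ v x = x - φ x • v := rfl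

lemma isProj_projAlong {φ : StrongDual 𝕜 E} {v : E} (hv : φ v = 1) :
    LinearMap.IsProj (LinearMap.ker (φ : E →ₗ[𝕜] 𝕜)) (projAlong φ v) where
  map_mem x := by simp [hv]
  map_id y hy := by rw [LinearMap.mem_ker, coe_coe] at hy; simp [hy]

lemma exists_eq_projAlong_of_isProj {φ : StrongDual 𝕜 E} {x₀ : E} (hx₀ : φ x₀ = 1)
    {Q : E →L[𝕜] E} (hQ : LinearMap.IsProj (LinearMap.ker (φ : E →ₗ[𝕜] 𝕜)) Q) :
    ∃ v, φ v = 1 ∧ Q = projAlong φ v := by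
  refine ⟨x₀ - Q x₀, by simpa [hx₀, sub_eq_self] using hQ.map_mem x₀, ?_⟩
  ext x
  have hfix : Q (x - φ x • x₀) = x - φ x • x₀ := hQ.map_id _ (by simp [hx₀])
  rw [map_sub, map_smul] at hfix
  rw [projAlong_apply]
  linear_combination (norm := module) hfix

lemma norm_projAlong_sub_projAlong (φ : StrongDual 𝕜 E) (v w : E) :
    ‖projAlong φ v - projAlong φ w‖ = ‖φ‖ * ‖w - v‖ := by
  have : projAlong φ v - projAlong φ w = φ.smulRight (w - v) := by
    ext x; simp [smul_sub]
  rw [this, norm_smulRight_apply]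

end ContinuousLinearMap

open ContinuousLinearMap (projAlong)

lemma norm_conj_div_norm_le_one (z : ℂ) : ‖conj z / ‖z‖‖ ≤ 1 := by
  rw [norm_div, Complex.norm_conj, Complex.norm_real, norm_norm]
  exact div_self_le_one _

lemma mul_conj_div_norm (z : ℂ) : z * (conj z / ‖z‖) = ‖z‖ := by
  rcases eq_or_ne z 0 with rfl | hz
  · simp
  rw [mul_div_assoc', Complex.mul_conj', div_eq_iff (by simpa using hz)]
  ring

section SupNorm

variable {ι : Type*} [Fintype ι]

noncomputable def linForm (f : ι → ℂ) : StrongDual ℂ (ι → ℂ) :=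
  ∑ j, f j • ContinuousLinearMap.proj j

@[simp]
lemma linForm_apply (f x : ι → ℂ) : linForm f x = ∑ j, f j * x j := by
  simp [linForm]

lemma norm_sum_mul_le (s : Finset ι) (f x : ι → ℂ) :
    ‖∑ j ∈ s, f j * x j‖ ≤ (∑ j ∈ s, ‖f j‖) * ‖x‖ := by
  rw [sum_mul]
  refine (norm_sum_le _ _).trans (sum_le_sum fun j _ => ?_)
  rw [norm_mul]
  exact mul_le_mul_of_nonneg_left (norm_le_pi_norm x j) (norm_nonneg _)

lemma norm_linForm (f : ι → ℂ) : ‖linForm f‖ = ∑ j, ‖f j‖ := by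
  refine le_antisymm (ContinuousLinearMap.opNorm_le_bound _ (by positivity) fun x => ?_) ?_
  · simpa using norm_sum_mul_le univ f x
  · have hx : ‖fun j => conj (f j) / ‖f j‖‖ ≤ 1 :=
      (pi_norm_le_iff_of_nonneg zero_le_one).mpr fun j => norm_conj_div_norm_le_one (f j)
    have := (linForm f).unit_le_opNorm _ hx
    simp_rw [linForm_apply, mul_conj_div_norm, ← Complex.ofReal_sum, Complex.norm_real,
      Real.norm_eq_abs] at this
    exact (le_abs_self _).trans this

variable [DecidableEq ι]

/-- `∑ⱼ |δᵢⱼ - vᵢ fⱼ|`, the `ℓ¹`-norm of the `i`-th row of the matrix of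
`projAlong (linForm f) v`. -/
noncomputable def rowNorm (f v : ι → ℂ) (i : ι) : ℝ :=
  ‖1 - f i * v i‖ + ‖v i‖ * ∑ j ∈ univ.erase i, ‖f j‖

lemma projAlong_linForm_apply (f v x : ι → ℂ) (i : ι) :
    projAlong (linForm f) v x i =
      x i * (1 - f i * v i) - v i * ∑ j ∈ univ.erase i, f j * x j := by
  rw [ContinuousLinearMap.projAlong_apply, linForm_apply, ← add_sum_erase _ _ (mem_univ i)]
  simp only [Pi.sub_apply, Pi.smul_apply, smul_eq_mul]
  ring

lemma norm_projAlong_linForm_le {f v : ι → ℂ} {C : ℝ} (hC : 0 ≤ C) (h : ∀ i, rowNorm f v i ≤ C) :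
    ‖projAlong (linForm f) v‖ ≤ C := by
  refine ContinuousLinearMap.opNorm_le_bound _ hC fun x => ?_
  refine (pi_norm_le_iff_of_nonneg (by positivity)).mpr fun i => ?_
  rw [projAlong_linForm_apply]
  calc _ ≤ ‖x i‖ * ‖1 - f i * v i‖ + ‖v i‖ * ((∑ j ∈ univ.erase i, ‖f j‖) * ‖x‖) := by
        refine (norm_sub_le _ _).trans (add_le_add (norm_mul _ _).le ?_)
        rw [norm_mul]
        exact mul_le_mul_of_nonneg_left (norm_sum_mul_le _ f x) (norm_nonneg _)
    _ ≤ ‖x‖ * rowNorm f v i := by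
        rw [rowNorm]
        nlinarith [norm_le_pi_norm x i, norm_nonneg (1 - f i * v i)]
    _ ≤ C * ‖x‖ := by
        rw [mul_comm]; exact mul_le_mul_of_nonneg_right (h i) (norm_nonneg _)

lemma rowNorm_le_norm_projAlong_linForm (f v : ι → ℂ) (i : ι) :
    rowNorm f v i ≤ ‖projAlong (linForm f) v‖ := by
  set Q := projAlong (linForm f) v
  let x : ι → ℂ := fun j =>
    if j = i then conj (1 - f i * v i) / ‖1 - f i * v i‖
    else -(conj (v i) / ‖v i‖ * (conj (f j) / ‖f j‖))
  have hx : ‖x‖ ≤ 1 := (pi_norm_le_iff_of_nonneg zero_le_one).mpr fun j => by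
    by_cases hj : j = i
    · simp only [x, hj, if_true]
      exact norm_conj_div_norm_le_one _
    · simp only [x, hj, if_false, norm_neg, norm_mul]
      exact mul_le_one₀ (norm_conj_div_norm_le_one _) (norm_nonneg _) (norm_conj_div_norm_le_one _)
  have hoff : ∀ j ∈ univ.erase i, v i * (f j * x j) = -(‖v i‖ * ‖f j‖ : ℝ) := fun j hj => by
    simp only [x, if_neg (ne_of_mem_erase hj)]
    rw [show v i * (f j * -(conj (v i) / ‖v i‖ * (conj (f j) / ‖f j‖))) =
      -((v i * (conj (v i) / ‖v i‖)) * (f j * (conj (f j) / ‖f j‖))) by ring,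
      mul_conj_div_norm, mul_conj_div_norm]
    push_cast; ring
  have hrow : Q x i = rowNorm f v i := by
    rw [projAlong_linForm_apply, mul_sum, sum_congr rfl hoff, mul_comm]
    simp only [x, if_pos rfl, mul_conj_div_norm, rowNorm, mul_sum, sum_neg_distrib]
    push_cast
    ring
  have := (norm_le_pi_norm (Q x) i).trans (Q.unit_le_opNorm x hx)
  rw [hrow, Complex.norm_real, Real.norm_eq_abs] at this
  exact (le_abs_self _).trans this

end SupNorm

lemma abs_re_add_sq_im_div_le_norm (w : ℂ) {R : ℝ} (hR : 0 < R) (hwR : ‖w‖ ≤ R) :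
    |w.re| + w.im ^ 2 / (2 * R) ≤ ‖w‖ := by
  have hsq : ‖w‖ ^ 2 = |w.re| ^ 2 + w.im ^ 2 := by
    rw [Complex.sq_norm, Complex.normSq_apply, sq_abs]; ring
  have hre : |w.re| ≤ ‖w‖ := Complex.abs_re_le_norm w
  rw [← le_sub_iff_add_le', div_le_iff₀ (by positivity)]
  nlinarith [mul_le_mul_of_nonneg_left (show ‖w‖ + |w.re| ≤ 2 * R by linarith)
    (sub_nonneg.mpr hre)]

lemma norm_le_re_add_sq_im_div (w : ℂ) (hw : 0 < w.re) :
    ‖w‖ ≤ w.re + w.im ^ 2 / (2 * w.re) := by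
  rw [← sq_le_sq₀ (norm_nonneg _) (by positivity), Complex.sq_norm, Complex.normSq_apply]
  have : w.im ^ 2 / (2 * w.re) * (2 * w.re) = w.im ^ 2 := div_mul_cancel₀ _ (by positivity)
  nlinarith [sq_nonneg (w.im ^ 2 / (2 * w.re))]

lemma abs_le_mul_sum_of_sum_eq_zero {ι : Type*} [Fintype ι] {s w : ι → ℝ} {δ : ℝ}
    (hs : ∑ i, s i = 0) (hδ : 0 ≤ δ) (hw : ∀ i, 0 ≤ w i) (h : ∀ i, s i ≤ δ * w i) (i : ι) :
    |s i| ≤ δ * ∑ j, w j := by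
  classical
  have hw_le : ∀ t ⊆ univ, ∑ j ∈ t, w j ≤ ∑ j, w j := fun t ht =>
    sum_le_sum_of_subset_of_nonneg ht fun j _ _ => hw j
  have hothers : ∑ j ∈ univ.erase i, s j = -s i := by
    rw [sum_erase_eq_sub (mem_univ i), hs, zero_sub]
  have hothers_le : ∑ j ∈ univ.erase i, s j ≤ δ * ∑ j, w j := by
    calc _ ≤ ∑ j ∈ univ.erase i, δ * w j := sum_le_sum fun j _ => h j
      _ ≤ δ * ∑ j, w j := by
        rw [← mul_sum]; exact mul_le_mul_of_nonneg_left (hw_le _ (erase_subset _ _)) hδ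
  have hsingle : δ * w i ≤ δ * ∑ j, w j :=
    mul_le_mul_of_nonneg_left (single_le_sum (fun j _ => hw j) (mem_univ i)) hδ
  rw [abs_le]
  constructor <;> linarith [h i]

namespace MinProj

variable {ι : Type*}

noncomputable def cost (b : ι → ℝ) (z : ι → ℂ) (i : ι) : ℝ := ‖1 - z i‖ + b i * ‖z i‖

lemma one_le_cost {b : ι → ℝ} (hb : ∀ i, 1 < b i) (z : ι → ℂ) (i : ι) : 1 ≤ cost b z i :=
  calc (1 : ℝ) = ‖(1 - z i) + z i‖ := by simp
    _ ≤ ‖1 - z i‖ + ‖z i‖ := norm_add_le _ _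
    _ ≤ cost b z i := add_le_add le_rfl (le_mul_of_one_le_left (norm_nonneg _) (hb i).le)

variable [Fintype ι]

noncomputable def weightSum (b : ι → ℝ) : ℝ := ∑ i, (b i - 1)⁻¹

/-- The real point `c` at which the costs `1 + (bᵢ - 1) cᵢ` are all equal, normalised by
`∑ cᵢ = 1`. -/
noncomputable def optimalPoint (b : ι → ℝ) (i : ι) : ℝ := (b i - 1)⁻¹ / weightSum b

noncomputable def optimalValue (b : ι → ℝ) : ℝ := 1 + (weightSum b)⁻¹

variable {b : ι → ℝ}

lemma inv_sub_one_le_weightSum (hb : ∀ i, 1 < b i) (i : ι) : (b i - 1)⁻¹ ≤ weightSum b :=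
  single_le_sum (fun j _ => (inv_pos.mpr (sub_pos.mpr (hb j))).le) (mem_univ i)

lemma weightSum_pos [Nonempty ι] (hb : ∀ i, 1 < b i) : 0 < weightSum b :=
  (inv_pos.mpr (sub_pos.mpr (hb (Classical.arbitrary ι)))).trans_le
    (inv_sub_one_le_weightSum hb _)

lemma one_lt_optimalValue [Nonempty ι] (hb : ∀ i, 1 < b i) : 1 < optimalValue b :=
  lt_add_of_pos_right 1 (inv_pos.mpr (weightSum_pos hb))

lemma optimalPoint_pos [Nonempty ι] (hb : ∀ i, 1 < b i) (i : ι) : 0 < optimalPoint b i :=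
  div_pos (inv_pos.mpr (sub_pos.mpr (hb i))) (weightSum_pos hb)

lemma optimalPoint_le_one [Nonempty ι] (hb : ∀ i, 1 < b i) (i : ι) : optimalPoint b i ≤ 1 :=
  (div_le_one (weightSum_pos hb)).mpr (inv_sub_one_le_weightSum hb i)

lemma optimalPoint_lt_one (hb : ∀ i, 1 < b i) {i j : ι} (hji : j ≠ i) : optimalPoint b i < 1 := by
  classical
  have hpos : ∀ k, 0 < (b k - 1)⁻¹ := fun k => inv_pos.mpr (sub_pos.mpr (hb k))
  have hlt : (b i - 1)⁻¹ < weightSum b :=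
    calc (b i - 1)⁻¹ < (b i - 1)⁻¹ + (b j - 1)⁻¹ := lt_add_of_pos_right _ (hpos j)
      _ = ∑ k ∈ {i, j}, (b k - 1)⁻¹ := (sum_pair (f := fun k => (b k - 1)⁻¹) hji.symm).symm
      _ ≤ weightSum b := sum_le_sum_of_subset_of_nonneg (subset_univ _) fun k _ _ => (hpos k).le
  exact (div_lt_one ((hpos i).trans hlt)).mpr hlt

lemma sum_optimalPoint [Nonempty ι] (hb : ∀ i, 1 < b i) : ∑ i, optimalPoint b i = 1 := by
  simp_rw [optimalPoint, ← sum_div]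
  exact div_self (weightSum_pos hb).ne'

lemma one_add_mul_optimalPoint [Nonempty ι] (hb : ∀ i, 1 < b i) (i : ι) :
    1 + (b i - 1) * optimalPoint b i = optimalValue b := by
  have : b i - 1 ≠ 0 := (sub_pos.mpr (hb i)).ne'
  rw [optimalPoint, optimalValue, mul_div_assoc', mul_inv_cancel₀ this, one_div]

lemma cost_optimalPoint [Nonempty ι] (hb : ∀ i, 1 < b i) (i : ι) :
    cost b (fun j => (optimalPoint b j : ℂ)) i = optimalValue b := by
  rw [cost, ← Complex.ofReal_one, ← Complex.ofReal_sub, Complex.norm_real, Complex.norm_real,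
    Real.norm_of_nonneg (sub_nonneg.mpr (optimalPoint_le_one hb i)),
    Real.norm_of_nonneg (optimalPoint_pos hb i).le, ← one_add_mul_optimalPoint hb i]
  ring

lemma optimalValue_add_le_of_cost_le [Nonempty ι] (hb : ∀ i, 1 < b i) {z : ι → ℂ} {i : ι}
    {M : ℝ} (hM : cost b z i ≤ M) :
    optimalValue b + (b i - 1) * ((z i).re - optimalPoint b i) + (z i).im ^ 2 / (2 * M) ≤ M := by
  have hM1 : 1 ≤ M := (one_le_cost hb z i).trans hM
  have hbz : 0 ≤ b i * ‖z i‖ := mul_nonneg (by linarith [hb i]) (norm_nonneg _)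
  have h1 := abs_re_add_sq_im_div_le_norm (1 - z i) (by linarith)
    ((le_add_of_nonneg_right hbz).trans hM)
  simp only [Complex.sub_re, Complex.one_re, Complex.sub_im, Complex.one_im, zero_sub,
    neg_sq] at h1
  have h2 : b i * (z i).re ≤ b i * ‖z i‖ :=
    mul_le_mul_of_nonneg_left (Complex.re_le_norm _) (by linarith [hb i])
  rw [cost] at hM
  rw [← one_add_mul_optimalPoint hb i]
  linarith [le_abs_self (1 - (z i).re)]

lemma optimalValue_le_and_abs_re_sub_le [Nonempty ι] (hb : ∀ i, 1 < b i) {z : ι → ℂ}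
    (hz : ∑ i, z i = 1) {M : ℝ} (hM : ∀ i, cost b z i ≤ M) :
    optimalValue b ≤ M ∧
      ∀ i, |(z i).re - optimalPoint b i| ≤ (M - optimalValue b) * weightSum b := by
  have hM0 : 0 < M := zero_lt_one.trans_le ((one_le_cost hb z (Classical.arbitrary ι)).trans (hM _))
  have hle : ∀ i, (z i).re - optimalPoint b i ≤ (M - optimalValue b) * (b i - 1)⁻¹ := fun i => by
    rw [le_mul_inv_iff₀ (sub_pos.mpr (hb i))]
    nlinarith [optimalValue_add_le_of_cost_le hb (hM i),
      div_nonneg (sq_nonneg (z i).im) (by linarith : (0 : ℝ) ≤ 2 * M)]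
  have hsum : ∑ i, ((z i).re - optimalPoint b i) = 0 := by
    rw [sum_sub_distrib, ← Complex.re_sum, hz, sum_optimalPoint hb, Complex.one_re, sub_self]
  have hδ : 0 ≤ M - optimalValue b := by
    have := sum_le_sum fun i (_ : i ∈ univ) => hle i
    rw [hsum, ← mul_sum] at this
    exact nonneg_of_mul_nonneg_left this (weightSum_pos hb)
  exact ⟨by linarith, abs_le_mul_sum_of_sum_eq_zero hsum hδ
    (fun j => (inv_pos.mpr (sub_pos.mpr (hb j))).le) hle⟩

lemma cost_le_of_re_eq [Nonempty ι] (hb : ∀ i, 1 < b i) {z : ι → ℂ} {i : ι}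
    (hre : (z i).re = optimalPoint b i) (hc : optimalPoint b i < 1) :
    cost b z i ≤ optimalValue b +
      (1 / (2 * (1 - optimalPoint b i)) + b i / (2 * optimalPoint b i)) * (z i).im ^ 2 := by
  have hc0 := optimalPoint_pos hb i
  have h1 := norm_le_re_add_sq_im_div (1 - z i) (by simpa [hre] using hc)
  have h2 := norm_le_re_add_sq_im_div (z i) (by rwa [hre])
  simp only [Complex.sub_re, Complex.one_re, Complex.sub_im, Complex.one_im, zero_sub,
    neg_sq, hre] at h1 h2
  have h3 := mul_le_mul_of_nonneg_left h2 (show 0 ≤ b i by linarith [hb i])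
  rw [cost, ← one_add_mul_optimalPoint hb i]
  calc _ ≤ (1 - optimalPoint b i + (z i).im ^ 2 / (2 * (1 - optimalPoint b i))) +
        b i * (optimalPoint b i + (z i).im ^ 2 / (2 * optimalPoint b i)) := add_le_add h1 h3
    _ = _ := by ring

theorem exists_sq_norm_sub_optimalPoint_le [Nonempty ι] (hb : ∀ i, 1 < b i) :
    ∃ K > 0, ∀ z : ι → ℂ, ∑ i, z i = 1 → ∀ M : ℝ, (∀ i, cost b z i ≤ M) →
      optimalValue b ≤ M ∧
        ∀ i, ‖z i - optimalPoint b i‖ ^ 2 ≤ K * (M ^ 2 - optimalValue b ^ 2) := by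
  set S := weightSum b
  set B := ∑ i, (b i - 1)
  have hS : 0 < S := weightSum_pos hb
  have hB_le : ∀ i, b i - 1 ≤ B := fun i =>
    single_le_sum (fun j _ => (sub_pos.mpr (hb j)).le) (mem_univ i)
  have hB : 0 ≤ B := (sub_pos.mpr (hb (Classical.arbitrary ι))).le.trans (hB_le _)
  refine ⟨S ^ 2 + 2 * (1 + B * S), by positivity, fun z hz M hM => ?_⟩
  set L := optimalValue b
  obtain ⟨hLM, hre⟩ := optimalValue_le_and_abs_re_sub_le hb hz hM
  refine ⟨hLM, fun i => ?_⟩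
  set s := (z i).re - optimalPoint b i
  have hM0 : 0 < M := by linarith [one_lt_optimalValue hb]
  have him : (z i).im ^ 2 ≤ 2 * M * ((M - L) * (1 + B * S)) := by
    have h1 := optimalValue_add_le_of_cost_le hb (hM i)
    rw [← le_sub_iff_add_le', div_le_iff₀ (by linarith)] at h1
    have h2 : -((b i - 1) * s) ≤ B * ((M - L) * S) :=
      calc -((b i - 1) * s) ≤ (b i - 1) * |s| := by
            rw [neg_mul_eq_mul_neg]
            exact mul_le_mul_of_nonneg_left (neg_le_abs _) (sub_pos.mpr (hb i)).le
        _ ≤ B * ((M - L) * S) := mul_le_mul (hB_le i) (hre i) (abs_nonneg _) hB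
    nlinarith
  have hnorm : ‖z i - optimalPoint b i‖ ^ 2 = s ^ 2 + (z i).im ^ 2 := by
    rw [Complex.sq_norm, Complex.normSq_apply]
    simp only [s, Complex.sub_re, Complex.sub_im, Complex.ofReal_re, Complex.ofReal_im, sub_zero]
    ring
  have hs2 : s ^ 2 ≤ ((M - L) * S) ^ 2 := by
    rw [← sq_abs]; exact pow_le_pow_left₀ (abs_nonneg _) (hre i) 2
  rw [hnorm]
  nlinarith [mul_nonneg (sub_nonneg.mpr hLM) (by linarith [one_lt_optimalValue hb] : (0 : ℝ) ≤ L),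
    mul_nonneg hB hS.le]

theorem exists_cost_le_of_re_eq [Nontrivial ι] (hb : ∀ i, 1 < b i) :
    ∃ K ≥ 0, ∀ z : ι → ℂ, (∀ i, (z i).re = optimalPoint b i) →
      ∀ i, cost b z i ≤ optimalValue b + K * (z i).im ^ 2 := by
  set κ : ι → ℝ := fun i => 1 / (2 * (1 - optimalPoint b i)) + b i / (2 * optimalPoint b i)
  have hc : ∀ i, optimalPoint b i < 1 := fun i => optimalPoint_lt_one hb (exists_ne i).choose_spec
  have hκ : ∀ i, 0 ≤ κ i := fun i =>
    add_nonneg (div_nonneg zero_le_one (by linarith [hc i]))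
      (div_nonneg (by linarith [hb i]) (by linarith [optimalPoint_pos hb i]))
  refine ⟨∑ i, κ i, sum_nonneg fun i _ => hκ i, fun z hz i => ?_⟩
  refine (cost_le_of_re_eq hb (hz i) (hc i)).trans ?_
  gcongr
  exact single_le_sum (fun j _ => hκ j) (mem_univ i)

end MinProj

lemma rpow_add_sub_rpow_le {L ε α : ℝ} (hL : 1 ≤ L) (hε : 0 ≤ ε) (hα : α ≤ 2) :
    (L + ε) ^ α - L ^ α ≤ (L + ε) ^ 2 - L ^ 2 := by
  have hsplit : ∀ x : ℝ, 0 < x → x ^ α = x ^ 2 * x ^ (α - 2) := fun x hx => by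
    rw [← Real.rpow_two, ← Real.rpow_add hx]; ring_nf
  have hL0 : 0 < L := by linarith
  have hp : L ^ (α - 2) ≤ 1 := Real.rpow_le_one_of_one_le_of_nonpos hL (by linarith)
  have hq : (L + ε) ^ (α - 2) ≤ L ^ (α - 2) :=
    Real.rpow_le_rpow_of_nonpos hL0 (by linarith) (by linarith)
  have hq0 : 0 ≤ (L + ε) ^ (α - 2) := Real.rpow_nonneg (by linarith) _
  have hsq : L ^ 2 ≤ (L + ε) ^ 2 := by nlinarith
  rw [hsplit L hL0, hsplit (L + ε) (by linarith)]
  nlinarith [mul_le_mul_of_nonneg_left hq (sq_nonneg (L + ε)),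
    mul_le_mul_of_nonneg_left hp (sub_nonneg.mpr hsq)]

lemma nonpos_of_le_mul_rpow {r D β : ℝ} (hβ : 0 < β)
    (h : ∀ t : ℝ, 0 < t → t ≤ 1 → r ≤ D * t ^ β) : r ≤ 0 := by
  have hlim : Tendsto (fun t : ℝ => D * t ^ β) (𝓝[>] 0) (𝓝 0) := by
    have := ((Real.continuousAt_rpow_const 0 β (Or.inr hβ.le)).tendsto.const_mul D).mono_left
      (nhdsWithin_le_nhds (s := Set.Ioi 0))
    simpa [Real.zero_rpow hβ.ne'] using this
  exact ge_of_tendsto hlim (eventually_of_mem (Ioc_mem_nhdsGT one_pos) fun t ht => h t ht.1 ht.2)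

theorem not_forall_mul_rpow_le {L K r α : ℝ} (hL : 1 ≤ L) (hK : 0 ≤ K) (hr : 0 < r)
    (hα : α < 2) : ¬ ∀ t : ℝ, 0 < t → t ≤ 1 → r * t ^ α ≤ (L + K * t ^ 2) ^ α - L ^ α := by
  intro h
  refine hr.not_ge (nonpos_of_le_mul_rpow (D := 2 * L * K + K ^ 2) (sub_pos.mpr hα)
    fun t ht0 ht1 => le_of_mul_le_mul_right ?_ (Real.rpow_pos_of_pos ht0 α))
  have hquad := (h t ht0 ht1).trans (rpow_add_sub_rpow_le hL (by positivity) hα.le)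
  have ht2 : t ^ 2 = t ^ (2 - α) * t ^ α := by
    rw [← Real.rpow_add ht0, sub_add_cancel, Real.rpow_two]
  have ht4 : t ^ 2 * t ^ 2 ≤ t ^ 2 := mul_le_of_le_one_right (sq_nonneg t) (by nlinarith)
  rw [mul_assoc, ← ht2]
  nlinarith [mul_le_mul_of_nonneg_left ht4 (sq_nonneg K), mul_nonneg (by linarith : 0 ≤ L) hK]

section Hyperplane

open MinProj

variable {ι : Type*} {f : ι → ℂ}

noncomputable def complementRatio (f : ι → ℂ) (i : ι) : ℝ := (1 - ‖f i‖) / ‖f i‖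

lemma one_lt_complementRatio (hf : ∀ j, 0 < ‖f j‖ ∧ ‖f j‖ < 1 / 2) (i : ι) :
    1 < complementRatio f i := by
  rw [complementRatio, one_lt_div (hf i).1]
  linarith [(hf i).2]

variable [Fintype ι]

lemma nontrivial_of_sum_norm_eq_one (hsum : ∑ j, ‖f j‖ = 1) (hlt : ∀ j, ‖f j‖ < 1) :
    Nontrivial ι := by
  classical
  obtain ⟨i, -, -⟩ := exists_ne_zero_of_sum_ne_zero (hsum ▸ one_ne_zero : ∑ j, ‖f j‖ ≠ 0)
  have hrest : ∑ j ∈ univ.erase i, ‖f j‖ ≠ 0 := by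
    rw [sum_erase_eq_sub (mem_univ i), hsum]
    linarith [hlt i]
  obtain ⟨j, hj, -⟩ := exists_ne_zero_of_sum_ne_zero hrest
  exact nontrivial_of_ne j i (ne_of_mem_erase hj)

noncomputable def optimalVector (f : ι → ℂ) : ι → ℂ :=
  fun i => optimalPoint (complementRatio f) i / f i

noncomputable def optimalProj (f : ι → ℂ) : (ι → ℂ) →L[ℂ] (ι → ℂ) :=
  projAlong (linForm f) (optimalVector f)

lemma mul_optimalVector (hf0 : ∀ i, f i ≠ 0) :
    f * optimalVector f = fun i => (optimalPoint (complementRatio f) i : ℂ) :=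
  funext fun i => mul_div_cancel₀ _ (hf0 i)

lemma linForm_optimalVector [Nonempty ι] (hf : ∀ j, 0 < ‖f j‖ ∧ ‖f j‖ < 1 / 2) :
    linForm f (optimalVector f) = 1 := by
  have := congrFun (mul_optimalVector fun i => norm_pos_iff.mp (hf i).1)
  simp only [Pi.mul_apply] at this
  simp_rw [linForm_apply, this, ← Complex.ofReal_sum,
    sum_optimalPoint (one_lt_complementRatio hf), Complex.ofReal_one]

lemma norm_sub_optimalProj (hsum : ∑ j, ‖f j‖ = 1) (v : ι → ℂ) :
    ‖projAlong (linForm f) v - optimalProj f‖ = ‖optimalVector f - v‖ := by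
  rw [optimalProj, ContinuousLinearMap.norm_projAlong_sub_projAlong, norm_linForm, hsum, one_mul]

lemma norm_optimalVector_sub_le (hf : ∀ j, 0 < ‖f j‖) {v : ι → ℂ} {ρ : ℝ} (hρ : 0 ≤ ρ)
    (h : ∀ i, ‖(f * v) i - optimalPoint (complementRatio f) i‖ ≤ ρ) :
    ‖optimalVector f - v‖ ≤ (∑ j, ‖f j‖⁻¹) * ρ := by
  refine (pi_norm_le_iff_of_nonneg (mul_nonneg (sum_nonneg fun j _ => (inv_pos.mpr (hf j)).le)
    hρ)).mpr fun i => ?_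
  have hfi : f i ≠ 0 := norm_pos_iff.mp (hf i)
  have : (optimalVector f - v) i = -((f * v) i - optimalPoint (complementRatio f) i) / f i := by
    simp only [optimalVector, Pi.sub_apply, Pi.mul_apply]
    field_simp
    ring
  rw [this, norm_div, norm_neg, div_eq_inv_mul]
  exact mul_le_mul (single_le_sum (fun j _ => (inv_pos.mpr (hf j)).le) (mem_univ i)) (h i)
    (norm_nonneg _) (sum_nonneg fun j _ => (inv_pos.mpr (hf j)).le)

variable [DecidableEq ι]

lemma rowNorm_eq_cost (hsum : ∑ j, ‖f j‖ = 1) (hf0 : ∀ i, f i ≠ 0) (v : ι → ℂ) (i : ι) :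
    rowNorm f v i = cost (complementRatio f) (f * v) i := by
  have : ‖f i‖ ≠ 0 := norm_ne_zero_iff.mpr (hf0 i)
  rw [rowNorm, cost, sum_erase_eq_sub (mem_univ i), hsum, complementRatio, Pi.mul_apply,
    norm_mul]
  field_simp

lemma norm_optimalProj_le [Nonempty ι] (hsum : ∑ j, ‖f j‖ = 1)
    (hf : ∀ j, 0 < ‖f j‖ ∧ ‖f j‖ < 1 / 2) :
    ‖optimalProj f‖ ≤ optimalValue (complementRatio f) := by
  have hf0 : ∀ i, f i ≠ 0 := fun i => norm_pos_iff.mp (hf i).1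
  refine norm_projAlong_linForm_le
    (zero_lt_one.trans (one_lt_optimalValue (one_lt_complementRatio hf))).le fun i => ?_
  rw [rowNorm_eq_cost hsum hf0, mul_optimalVector hf0,
    cost_optimalPoint (one_lt_complementRatio hf)]

theorem optimalProj_quadratic_growth [Nonempty ι] (hsum : ∑ j, ‖f j‖ = 1)
    (hf : ∀ j, 0 < ‖f j‖ ∧ ‖f j‖ < 1 / 2) :
    ∃ r > 0, ∀ Q : (ι → ℂ) →L[ℂ] (ι → ℂ),
      LinearMap.IsProj (LinearMap.ker (linForm f : (ι → ℂ) →ₗ[ℂ] ℂ)) Q →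
        optimalValue (complementRatio f) ≤ ‖Q‖ ∧
          optimalValue (complementRatio f) ^ 2 + r * ‖Q - optimalProj f‖ ^ 2 ≤ ‖Q‖ ^ 2 := by
  have hf0 : ∀ i, f i ≠ 0 := fun i => norm_pos_iff.mp (hf i).1
  obtain ⟨K, hK, hcore⟩ := exists_sq_norm_sub_optimalPoint_le (one_lt_complementRatio hf)
  set A := ∑ j, ‖f j‖⁻¹
  have hA : 0 < A := sum_pos (fun j _ => inv_pos.mpr (hf j).1) univ_nonempty
  refine ⟨(K * A ^ 2)⁻¹, by positivity, fun Q hQ => ?_⟩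
  obtain ⟨v, hv, rfl⟩ :=
    ContinuousLinearMap.exists_eq_projAlong_of_isProj (linForm_optimalVector hf) hQ
  obtain ⟨hLQ, hdist⟩ := hcore (f * v) (by simpa using hv) _ fun i =>
    (rowNorm_eq_cost hsum hf0 v i).symm.trans_le (rowNorm_le_norm_projAlong_linForm f v i)
  set X := ‖projAlong (linForm f) v‖ ^ 2 - optimalValue (complementRatio f) ^ 2
  have hX : 0 ≤ K * X :=
    mul_nonneg hK.le (by nlinarith [(one_lt_optimalValue (one_lt_complementRatio hf)).le])
  have hnorm := norm_optimalVector_sub_le (fun j => (hf j).1) (Real.sqrt_nonneg (K * X))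
    fun i => Real.le_sqrt_of_sq_le (hdist i)
  refine ⟨hLQ, ?_⟩
  rw [norm_sub_optimalProj hsum, ← le_sub_iff_add_le', inv_mul_le_iff₀ (by positivity)]
  nlinarith [pow_le_pow_left₀ (norm_nonneg _) hnorm 2, Real.sq_sqrt hX]

lemma exists_norm_projAlong_le_of_re_eq [Nontrivial ι] (hsum : ∑ j, ‖f j‖ = 1)
    (hf : ∀ j, 0 < ‖f j‖ ∧ ‖f j‖ < 1 / 2) :
    ∃ K ≥ 0, ∀ (v : ι → ℂ) (t : ℝ), (∀ i, ((f * v) i).re = optimalPoint (complementRatio f) i) →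
      (∀ i, |((f * v) i).im| ≤ t) →
        ‖projAlong (linForm f) v‖ ≤ optimalValue (complementRatio f) + K * t ^ 2 := by
  have hb := one_lt_complementRatio hf
  obtain ⟨K, hK, hcost⟩ := exists_cost_le_of_re_eq hb
  refine ⟨K, hK, fun v t hre him => norm_projAlong_linForm_le ?_ fun i => ?_⟩
  · have := abs_nonneg ((f * v) (Classical.arbitrary ι)).im
    nlinarith [one_lt_optimalValue hb, him (Classical.arbitrary ι)]
  rw [rowNorm_eq_cost hsum (fun i => norm_pos_iff.mp (hf i).1)]
  refine (hcost _ hre i).trans ?_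
  have := mul_le_mul_of_nonneg_left (sq_le_sq' (abs_le.mp (him i)).1 (abs_le.mp (him i)).2) hK
  linarith

lemma exists_imaginary_perturbation [Nontrivial ι] (hf : ∀ j, 0 < ‖f j‖ ∧ ‖f j‖ < 1 / 2)
    {t : ℝ} (ht : 0 ≤ t) :
    ∃ v : ι → ℂ, linForm f v = 1 ∧ (∀ i, ((f * v) i).re = optimalPoint (complementRatio f) i) ∧
      (∀ i, |((f * v) i).im| ≤ t) ∧ t ≤ ‖optimalVector f - v‖ := by
  have hf0 : ∀ i, f i ≠ 0 := fun i => norm_pos_iff.mp (hf i).1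
  obtain ⟨i₀, i₁, hi⟩ := exists_pair_ne ι
  set u : ι → ℝ := Pi.single i₀ 1 - Pi.single i₁ 1
  set z : ι → ℂ := fun i => optimalPoint (complementRatio f) i + (t * u i : ℝ) * Complex.I
  set v : ι → ℂ := fun i => z i / f i
  have hfv : f * v = z := funext fun i => mul_div_cancel₀ _ (hf0 i)
  refine ⟨v, ?_, fun i => ?_, fun i => ?_, ?_⟩
  · have hu : ∑ i, u i = 0 := by simp [u, sum_sub_distrib]
    simp only [linForm_apply, ← Pi.mul_apply f v, hfv, z, sum_add_distrib, ← sum_mul,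
      ← Complex.ofReal_sum, ← mul_sum, hu, sum_optimalPoint (one_lt_complementRatio hf)]
    simp
  · rw [hfv]; simp [z]
  · have hu : |u i| ≤ 1 := by
      simp only [u, Pi.sub_apply, Pi.single_apply]
      split_ifs <;> norm_num
    rw [hfv]
    simpa [z, abs_mul, abs_of_nonneg ht] using mul_le_of_le_one_right ht hu
  · refine le_trans ?_ (norm_le_pi_norm _ i₀)
    have : (optimalVector f - v) i₀ = -(t * Complex.I) / f i₀ := by
      simp [optimalVector, v, z, u, hi]
      ring
    rw [this, norm_div, norm_neg, norm_mul, Complex.norm_I, mul_one, Complex.norm_real,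
      Real.norm_of_nonneg ht, le_div_iff₀ (hf i₀).1]
    exact mul_le_of_le_one_right ht (by linarith [(hf i₀).2])

theorem exists_isProj_norm_le_add_sq [Nontrivial ι] (hsum : ∑ j, ‖f j‖ = 1)
    (hf : ∀ j, 0 < ‖f j‖ ∧ ‖f j‖ < 1 / 2) :
    ∃ K ≥ 0, ∀ t : ℝ, 0 ≤ t → ∃ Q : (ι → ℂ) →L[ℂ] (ι → ℂ),
      LinearMap.IsProj (LinearMap.ker (linForm f : (ι → ℂ) →ₗ[ℂ] ℂ)) Q ∧
        ‖Q‖ ≤ optimalValue (complementRatio f) + K * t ^ 2 ∧ t ≤ ‖Q - optimalProj f‖ := by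
  obtain ⟨K, hK, hnorm⟩ := exists_norm_projAlong_le_of_re_eq hsum hf
  refine ⟨K, hK, fun t ht => ?_⟩
  obtain ⟨v, hv, hre, him, hdist⟩ := exists_imaginary_perturbation hf ht
  exact ⟨_, ContinuousLinearMap.isProj_projAlong hv, hnorm v t hre him,
    (norm_sub_optimalProj hsum v).symm ▸ hdist⟩

end Hyperplane

theorem stmt18 (n : ℕ) (f : Fin n → ℂ)
    (hsum : ∑ j, ‖f j‖ = 1)
    (hf : ∀ j, 0 < ‖f j‖ ∧ ‖f j‖ < 1 / 2)
    (Y : Submodule ℂ (Fin n → ℂ))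
    (hY : ∀ x : Fin n → ℂ, x ∈ Y ↔ ∑ j, f j * x j = 0)
    (P : (Fin n → ℂ) →L[ℂ] (Fin n → ℂ))
    (hPY : ∀ z, P z ∈ Y) (hPid : ∀ y ∈ Y, P y = y)
    (hPmin : ∀ Q : (Fin n → ℂ) →L[ℂ] (Fin n → ℂ),
      (∀ z, Q z ∈ Y) → (∀ y ∈ Y, Q y = y) → ‖P‖ ≤ ‖Q‖) :
    (∃ r > 0, ∀ Q : (Fin n → ℂ) →L[ℂ] (Fin n → ℂ),
      (∀ z, Q z ∈ Y) → (∀ y ∈ Y, Q y = y) → ‖Q‖ ^ 2 ≥ ‖P‖ ^ 2 + r * ‖Q - P‖ ^ 2) ∧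
    (∀ α : ℝ, 1 ≤ α → α < 2 →
      ¬ ∃ r > 0, ∀ Q : (Fin n → ℂ) →L[ℂ] (Fin n → ℂ),
        (∀ z, Q z ∈ Y) → (∀ y ∈ Y, Q y = y) → ‖Q‖ ^ α ≥ ‖P‖ ^ α + r * ‖Q - P‖ ^ α) := by
  have := nontrivial_of_sum_norm_eq_one hsum fun j => (hf j).2.trans (by norm_num)
  obtain rfl : Y = LinearMap.ker (linForm f : (Fin n → ℂ) →ₗ[ℂ] ℂ) := by ext x; simp [hY]
  set L := MinProj.optimalValue (complementRatio f)
  have hL : 1 < L := MinProj.one_lt_optimalValue (one_lt_complementRatio hf)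
  obtain ⟨r, hr, hgrowth⟩ := optimalProj_quadratic_growth hsum hf
  have hopt := ContinuousLinearMap.isProj_projAlong (linForm_optimalVector hf)
  have hPL : ‖P‖ ≤ L := (hPmin _ hopt.map_mem hopt.map_id).trans (norm_optimalProj_le hsum hf)
  obtain ⟨hLP, hPgrowth⟩ := hgrowth P ⟨hPY, hPid⟩
  obtain rfl : P = optimalProj f := by
    have : ‖P - optimalProj f‖ ^ 2 ≤ 0 := by nlinarith
    simpa [sub_eq_zero] using this
  rw [show ‖optimalProj f‖ = L from le_antisymm hPL hLP]
  refine ⟨⟨r, hr, fun Q hQY hQid => by linarith [(hgrowth Q ⟨hQY, hQid⟩).2]⟩,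
    fun α hα1 hα2 ⟨r, hr, h⟩ => ?_⟩
  obtain ⟨K, hK, hpert⟩ := exists_isProj_norm_le_add_sq hsum hf
  refine not_forall_mul_rpow_le hL.le hK hr hα2 fun t ht0 ht1 => ?_
  obtain ⟨Q, hQ, hQnorm, hQdist⟩ := hpert t ht0.le
  have hα0 : 0 ≤ α := by linarith
  calc r * t ^ α ≤ r * ‖Q - optimalProj f‖ ^ α := by gcongr
    _ ≤ ‖Q‖ ^ α - L ^ α := by linarith [h Q hQ.map_mem hQ.map_id]
    _ ≤ _ := by gcongr
end
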